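/- Let K be an ELHI_¬ knowledge base that has a classical model, and let q be a Boolean conjunctive query with values whose only value operator is T. If K ⊨ q^♭ (where q^♭ replaces each T(A(t)) by the atom A(t)), then K ⊨₄ q. -/

import Mathlib

namespace Para

/-! ### Syntax -/

inductive Role (RN : Type) : Type where
  | name : RN → Role RN
  | inv  : RN → Role RN

inductive Concept (CN RN : Type) : Type where
  | top   : Concept CN RN
  | atom  : CN → Concept CN RN
  | neg   : Concept CN RN → Concept CN RN
  | tri   : Concept CN RN → Concept CN RN
  | inter : Concept CN RN → Concept CN RN → Concept CN RN
  | all   : Role RN → Concept CN RN → Concept CN RN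

namespace Concept
variable {CN RN : Type}
def bot : Concept CN RN := neg top
def union (C D : Concept CN RN) : Concept CN RN := neg (inter (neg C) (neg D))
def ex (S : Role RN) (C : Concept CN RN) : Concept CN RN := neg (all S (neg C))
end Concept

inductive DLAxiom (CN RN : Type) : Type where
  | cinc : Concept CN RN → Concept CN RN → DLAxiom CN RN
  | rinc : Role RN → Role RN → DLAxiom CN RN

inductive Assertion (CN RN IN : Type) : Type where
  | ca : CN → IN → Assertion CN RN IN
  | ra : RN → IN → IN → Assertion CN RN IN

inductive Frm (CN RN IN : Type) : Type where
  | ax : DLAxiom CN RN → Frm CN RN IN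
  | assert : Assertion CN RN IN → Frm CN RN IN

/-! ### Four-valued interpretations -/

structure FourInterp (CN RN IN : Type) : Type 1 where
  Dom : Type
  dom_nonempty : Nonempty Dom
  cpos : CN → Set Dom
  cneg : CN → Set Dom
  rext : RN → Set (Dom × Dom)
  ind : IN → Dom

variable {CN RN IN V : Type}

def FourInterp.rInterp (I : FourInterp CN RN IN) : Role RN → Set (I.Dom × I.Dom)
  | .name R => I.rext R
  | .inv R  => {p | (p.2, p.1) ∈ I.rext R}

/-- Positive and negative extensions of a concept, as a pair. -/
def FourInterp.ext (I : FourInterp CN RN IN) : Concept CN RN → Set I.Dom × Set I.Dom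
  | .top => (Set.univ, ∅)
  | .atom A => (I.cpos A, I.cneg A)
  | .neg C => ((I.ext C).2, (I.ext C).1)
  | .tri C => ((I.ext C).1, ((I.ext C).1)ᶜ)
  | .inter C D => ((I.ext C).1 ∩ (I.ext D).1, (I.ext C).2 ∪ (I.ext D).2)
  | .all S C => ({x | ∀ y, (x, y) ∈ I.rInterp S → y ∈ (I.ext C).1},
                 {x | ∃ y, (x, y) ∈ I.rInterp S ∧ y ∈ (I.ext C).2})

def FourInterp.pExt (I : FourInterp CN RN IN) (C : Concept CN RN) : Set I.Dom := (I.ext C).1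
def FourInterp.nExt (I : FourInterp CN RN IN) (C : Concept CN RN) : Set I.Dom := (I.ext C).2

def FourInterp.satAx (I : FourInterp CN RN IN) : DLAxiom CN RN → Prop
  | .cinc C D => I.pExt C ⊆ I.pExt D
  | .rinc S S' => I.rInterp S ⊆ I.rInterp S'

def FourInterp.satAssert (I : FourInterp CN RN IN) : Assertion CN RN IN → Prop
  | .ca A a => I.ind a ∈ I.cpos A
  | .ra R a b => (I.ind a, I.ind b) ∈ I.rext R

def FourInterp.satFrm (I : FourInterp CN RN IN) : Frm CN RN IN → Prop
  | .ax ax => I.satAx ax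
  | .assert α => I.satAssert α

/-! ### Classical interpretations -/

structure ClassInterp (CN RN IN : Type) : Type 1 where
  Dom : Type
  dom_nonempty : Nonempty Dom
  cext : CN → Set Dom
  rext : RN → Set (Dom × Dom)
  ind : IN → Dom

def ClassInterp.rInterp (J : ClassInterp CN RN IN) : Role RN → Set (J.Dom × J.Dom)
  | .name R => J.rext R
  | .inv R  => {p | (p.2, p.1) ∈ J.rext R}

def ClassInterp.ext (J : ClassInterp CN RN IN) : Concept CN RN → Set J.Dom
  | .top => Set.univ
  | .atom A => J.cext A
  | .neg C => (J.ext C)ᶜ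
  | .tri C => J.ext C
  | .inter C D => J.ext C ∩ J.ext D
  | .all S C => {x | ∀ y, (x, y) ∈ J.rInterp S → y ∈ J.ext C}

def ClassInterp.satAx (J : ClassInterp CN RN IN) : DLAxiom CN RN → Prop
  | .cinc C D => J.ext C ⊆ J.ext D
  | .rinc S S' => J.rInterp S ⊆ J.rInterp S'

def ClassInterp.satAssert (J : ClassInterp CN RN IN) : Assertion CN RN IN → Prop
  | .ca A a => J.ind a ∈ J.cext A
  | .ra R a b => (J.ind a, J.ind b) ∈ J.rext R

def ClassInterp.satFrm (J : ClassInterp CN RN IN) : Frm CN RN IN → Prop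
  | .ax ax => J.satAx ax
  | .assert α => J.satAssert α

/-! ### Knowledge bases -/

structure KB (CN RN IN : Type) : Type where
  tbox : Set (DLAxiom CN RN)
  abox : Set (Assertion CN RN IN)
  tbox_finite : tbox.Finite
  abox_finite : abox.Finite

def FourInterp.satKB (I : FourInterp CN RN IN) (K : KB CN RN IN) : Prop :=
  (∀ ax ∈ K.tbox, I.satAx ax) ∧ (∀ α ∈ K.abox, I.satAssert α)

def ClassInterp.satKB (J : ClassInterp CN RN IN) (K : KB CN RN IN) : Prop :=
  (∀ ax ∈ K.tbox, J.satAx ax) ∧ (∀ α ∈ K.abox, J.satAssert α)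

def fourEntailsFrm (K : KB CN RN IN) (φ : Frm CN RN IN) : Prop :=
  ∀ I : FourInterp CN RN IN, I.satKB K → I.satFrm φ

def clEntailsFrm (K : KB CN RN IN) (φ : Frm CN RN IN) : Prop :=
  ∀ J : ClassInterp CN RN IN, J.satKB K → J.satFrm φ


/-! ### Negation normal form -/

inductive IsNNF {CN RN : Type} : Concept CN RN → Prop where
  | top : IsNNF Concept.top
  | bot : IsNNF Concept.bot
  | atom (A : CN) : IsNNF (Concept.atom A)
  | negAtom (A : CN) : IsNNF (Concept.neg (Concept.atom A))
  | triAtom (A : CN) : IsNNF (Concept.tri (Concept.atom A))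
  | triNegAtom (A : CN) : IsNNF (Concept.tri (Concept.neg (Concept.atom A)))
  | negTriAtom (A : CN) : IsNNF (Concept.neg (Concept.tri (Concept.atom A)))
  | negTriNegAtom (A : CN) : IsNNF (Concept.neg (Concept.tri (Concept.neg (Concept.atom A))))
  | inter {C D : Concept CN RN} : IsNNF C → IsNNF D → IsNNF (Concept.inter C D)
  | union {C D : Concept CN RN} : IsNNF C → IsNNF D → IsNNF (Concept.union C D)
  | all {C : Concept CN RN} (S : Role RN) : IsNNF C → IsNNF (Concept.all S C)
  | ex {C : Concept CN RN} (S : Role RN) : IsNNF C → IsNNF (Concept.ex S C)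

def AxInNNF : DLAxiom CN RN → Prop
  | .cinc C D => IsNNF C ∧ IsNNF D
  | .rinc _ _ => True

def FrmInNNF : Frm CN RN IN → Prop
  | .ax ax => AxInNNF ax
  | .assert _ => True

def KBInNNF (K : KB CN RN IN) : Prop := ∀ ax ∈ K.tbox, AxInNNF ax

/-! ### Classical counterpart translation (for concepts in NNF) -/

def clConcept {CN RN : Type} : Concept CN RN → Concept (CN ⊕ CN) RN
  | .atom A => .atom (.inl A)
  | .neg (.atom A) => .atom (.inr A)
  | .tri (.atom A) => .atom (.inl A)
  | .tri (.neg (.atom A)) => .atom (.inr A)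
  | .neg (.tri (.atom A)) => .neg (.atom (.inl A))
  | .neg (.tri (.neg (.atom A))) => .neg (.atom (.inr A))
  | .top => .top
  | .neg .top => .neg .top
  | .neg (.inter (.neg C) (.neg D)) => Concept.union (clConcept C) (clConcept D)
  | .neg (.all S (.neg C)) => Concept.ex S (clConcept C)
  | .inter C D => .inter (clConcept C) (clConcept D)
  | .all S C => .all S (clConcept C)
  | _ => .top

def clAxiom : DLAxiom CN RN → DLAxiom (CN ⊕ CN) RN
  | .cinc C D => .cinc (clConcept C) (clConcept D)
  | .rinc S S' => .rinc S S'

def clAssertion : Assertion CN RN IN → Assertion (CN ⊕ CN) RN IN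
  | .ca A a => .ca (.inl A) a
  | .ra R a b => .ra R a b

def clFrm : Frm CN RN IN → Frm (CN ⊕ CN) RN IN
  | .ax ax => .ax (clAxiom ax)
  | .assert α => .assert (clAssertion α)

def clKB (K : KB CN RN IN) : KB (CN ⊕ CN) RN IN where
  tbox := clAxiom '' K.tbox
  abox := clAssertion '' K.abox
  tbox_finite := K.tbox_finite.image _
  abox_finite := K.abox_finite.image _

/-- The classical counterpart `I^cl` of a 4-interpretation. -/
def FourInterp.toClassical (I : FourInterp CN RN IN) : ClassInterp (CN ⊕ CN) RN IN where
  Dom := I.Dom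
  dom_nonempty := I.dom_nonempty
  cext := Sum.elim I.cpos I.cneg
  rext := I.rext
  ind := I.ind

/-- The 4-counterpart of a classical interpretation over names `A⁺, A⁻`. -/
def ClassInterp.toFour (J : ClassInterp (CN ⊕ CN) RN IN) : FourInterp CN RN IN where
  Dom := J.Dom
  dom_nonempty := J.dom_nonempty
  cpos := fun A => J.cext (.inl A)
  cneg := fun A => J.cext (.inr A)
  rext := J.rext
  ind := J.ind

/-! ### The △-prefixing translation -/

def triConcept : Concept CN RN → Concept CN RN
  | .top => .top
  | .atom A => .tri (.atom A)
  | .neg C => .neg (triConcept C)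
  | .tri C => .tri (triConcept C)
  | .inter C D => .inter (triConcept C) (triConcept D)
  | .all S C => .all S (triConcept C)

def TriFree : Concept CN RN → Prop
  | .top => True
  | .atom _ => True
  | .neg C => TriFree C
  | .tri _ => False
  | .inter C D => TriFree C ∧ TriFree D
  | .all _ C => TriFree C

def AxTriFree : DLAxiom CN RN → Prop
  | .cinc C D => TriFree C ∧ TriFree D
  | .rinc _ _ => True

def FrmTriFree : Frm CN RN IN → Prop
  | .ax ax => AxTriFree ax
  | .assert _ => True

def KBTriFree (K : KB CN RN IN) : Prop := ∀ ax ∈ K.tbox, AxTriFree ax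

def triAxiom : DLAxiom CN RN → DLAxiom CN RN
  | .cinc C D => .cinc (triConcept C) (triConcept D)
  | .rinc S S' => .rinc S S'

def triFrm : Frm CN RN IN → Frm CN RN IN
  | .ax ax => .ax (triAxiom ax)
  | .assert α => .assert α

def triKB (K : KB CN RN IN) : KB CN RN IN where
  tbox := triAxiom '' K.tbox
  abox := K.abox
  tbox_finite := K.tbox_finite.image _
  abox_finite := K.abox_finite

/-! ### Removing △ -/

def flatConcept : Concept CN RN → Concept CN RN
  | .top => .top
  | .atom A => .atom A
  | .neg C => .neg (flatConcept C)
  | .tri C => flatConcept C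
  | .inter C D => .inter (flatConcept C) (flatConcept D)
  | .all S C => .all S (flatConcept C)

def flatAxiom : DLAxiom CN RN → DLAxiom CN RN
  | .cinc C D => .cinc (flatConcept C) (flatConcept D)
  | .rinc S S' => .rinc S S'

def flatKB (K : KB CN RN IN) : KB CN RN IN where
  tbox := flatAxiom '' K.tbox
  abox := K.abox
  tbox_finite := K.tbox_finite.image _
  abox_finite := K.abox_finite

/-! ### ELHI_¬ knowledge bases -/

def AtomTop (C : Concept CN RN) : Prop := C = Concept.top ∨ ∃ A, C = Concept.atom A

def AtomTopBot (C : Concept CN RN) : Prop :=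
  C = Concept.top ∨ C = Concept.bot ∨ ∃ A, C = Concept.atom A

def IsELHInegAxiom : DLAxiom CN RN → Prop
  | .rinc _ _ => True
  | .cinc L M =>
      (AtomTop L ∧ ∃ S B, AtomTop B ∧ M = Concept.ex S B) ∨
      ((∃ S A, AtomTop A ∧ L = Concept.ex S A) ∧ AtomTopBot M) ∨
      ((∃ A B, AtomTop A ∧ AtomTop B ∧ L = Concept.inter A B) ∧ AtomTopBot M) ∨
      (AtomTop L ∧ ∃ B, AtomTop B ∧ M = Concept.neg B)

def IsELHInegKB (K : KB CN RN IN) : Prop := ∀ ax ∈ K.tbox, IsELHInegAxiom ax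

/-- `K⁺`: drop all concept inclusions of the weak-disjointness form `A ⊑ ¬B`
(`B` a concept name; note that in `ELHI_¬` the derived constructors `∃S.B` and
`⊥` are not of this form). -/
def KPlus (K : KB CN RN IN) : KB CN RN IN where
  tbox := {ax ∈ K.tbox |
    ∀ (L : Concept CN RN) (B : CN), ax ≠ DLAxiom.cinc L (Concept.neg (Concept.atom B))}
  abox := K.abox
  tbox_finite := K.tbox_finite.subset (Set.sep_subset _ _)
  abox_finite := K.abox_finite

/-! ### Conjunctive queries -/

inductive Term (V IN : Type) : Type where
  | var : V → Term V IN
  | ind : IN → Term V IN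

structure CQ (CN RN IN V : Type) : Type where
  roleAtoms : Set (RN × Term V IN × Term V IN)
  concAtoms : Set (CN × Term V IN)
  roleAtoms_finite : roleAtoms.Finite
  concAtoms_finite : concAtoms.Finite

def FourInterp.cqMatch (I : FourInterp CN RN IN) (q : CQ CN RN IN V)
    (π : Term V IN → I.Dom) : Prop :=
  (∀ c : IN, π (Term.ind c) = I.ind c) ∧
  (∀ p ∈ q.roleAtoms, (π p.2.1, π p.2.2) ∈ I.rext p.1) ∧
  (∀ p ∈ q.concAtoms, π p.2 ∈ I.cpos p.1)

def ClassInterp.cqMatch (J : ClassInterp CN RN IN) (q : CQ CN RN IN V)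
    (π : Term V IN → J.Dom) : Prop :=
  (∀ c : IN, π (Term.ind c) = J.ind c) ∧
  (∀ p ∈ q.roleAtoms, (π p.2.1, π p.2.2) ∈ J.rext p.1) ∧
  (∀ p ∈ q.concAtoms, π p.2 ∈ J.cext p.1)

def fourEntailsCQ (K : KB CN RN IN) (q : CQ CN RN IN V) : Prop :=
  ∀ I : FourInterp CN RN IN, I.satKB K → ∃ π, I.cqMatch q π

def clEntailsCQ (K : KB CN RN IN) (q : CQ CN RN IN V) : Prop :=
  ∀ J : ClassInterp CN RN IN, J.satKB K → ∃ π, J.cqMatch q π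

/-! ### Conjunctive queries with values -/

inductive TVal : Type where
  | T | B | N | F

structure CQV (CN RN IN V : Type) : Type where
  roleAtoms : Set (RN × Term V IN × Term V IN)
  concAtoms : Set (CN × Term V IN)
  valAtoms : Set (TVal × CN × Term V IN)
  roleAtoms_finite : roleAtoms.Finite
  concAtoms_finite : concAtoms.Finite
  valAtoms_finite : valAtoms.Finite

namespace CQV

def atV (q : CQV CN RN IN V) (X : TVal) : Set (CN × Term V IN) :=
  {p | (X, p.1, p.2) ∈ q.valAtoms}

theorem atV_finite (q : CQV CN RN IN V) (X : TVal) : (q.atV X).Finite := by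
  have h : q.atV X ⊆ (fun w : TVal × CN × Term V IN => (w.2.1, w.2.2)) '' q.valAtoms := by
    rintro ⟨A, t⟩ h
    exact ⟨(X, A, t), h, rfl⟩
  exact (q.valAtoms_finite.image _).subset h

def atPlus (q : CQV CN RN IN V) : Set (CN × Term V IN) :=
  q.concAtoms ∪ q.atV TVal.T ∪ q.atV TVal.B

def atBF (q : CQV CN RN IN V) : Set (CN × Term V IN) := q.atV TVal.B ∪ q.atV TVal.F
def atTN (q : CQV CN RN IN V) : Set (CN × Term V IN) := q.atV TVal.T ∪ q.atV TVal.N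
def atFN (q : CQV CN RN IN V) : Set (CN × Term V IN) := q.atV TVal.F ∪ q.atV TVal.N

theorem atPlus_finite (q : CQV CN RN IN V) : q.atPlus.Finite :=
  (q.concAtoms_finite.union (q.atV_finite TVal.T)).union (q.atV_finite TVal.B)

theorem atBF_finite (q : CQV CN RN IN V) : q.atBF.Finite :=
  (q.atV_finite TVal.B).union (q.atV_finite TVal.F)

end CQV

/-- Item 1 of the definition of answers: the match required in every 4-model. -/
def FourInterp.cqvMatch1 (I : FourInterp CN RN IN) (q : CQV CN RN IN V)
    (π : Term V IN → I.Dom) : Prop :=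
  (∀ c : IN, π (Term.ind c) = I.ind c) ∧
  (∀ p ∈ q.roleAtoms, (π p.2.1, π p.2.2) ∈ I.rext p.1) ∧
  (∀ p ∈ q.atPlus, π p.2 ∈ I.cpos p.1) ∧
  (∀ p ∈ q.atBF, π p.2 ∈ I.cneg p.1)

/-- Item 2: the extra conditions required of a match in some 4-model. -/
def FourInterp.cqvMatch2 (I : FourInterp CN RN IN) (q : CQV CN RN IN V)
    (π : Term V IN → I.Dom) : Prop :=
  (∀ p ∈ q.atTN, π p.2 ∉ I.cneg p.1) ∧
  (∀ p ∈ q.atFN, π p.2 ∉ I.cpos p.1)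

def fourEntailsCQV (K : KB CN RN IN) (q : CQV CN RN IN V) : Prop :=
  (∀ I : FourInterp CN RN IN, I.satKB K → ∃ π, I.cqvMatch1 q π) ∧
  (∃ I : FourInterp CN RN IN, I.satKB K ∧ ∃ π, I.cqvMatch1 q π ∧ I.cqvMatch2 q π)


/-! ### The flattened query `q^♭` (T ↦ positive atom, F ↦ negated atom) -/

def ClassInterp.flatMatch (J : ClassInterp CN RN IN) (q : CQV CN RN IN V)
    (π : Term V IN → J.Dom) : Prop :=
  (∀ c : IN, π (Term.ind c) = J.ind c) ∧
  (∀ p ∈ q.roleAtoms, (π p.2.1, π p.2.2) ∈ J.rext p.1) ∧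
  (∀ p ∈ q.concAtoms ∪ q.atV TVal.T, π p.2 ∈ J.cext p.1) ∧
  (∀ p ∈ q.atV TVal.F, π p.2 ∉ J.cext p.1)

def clEntailsFlat (K : KB CN RN IN) (q : CQV CN RN IN V) : Prop :=
  ∀ J : ClassInterp CN RN IN, J.satKB K → ∃ π, J.flatMatch q π

/-! ### Reduction to classical query answering (Theorem queryreduction ingredients) -/

/-- `c_t`: the fresh individual name associated to a term. -/
def Term.toInd : Term V IN → IN ⊕ V
  | .ind c => Sum.inl c
  | .var x => Sum.inr x

/-- `q⁺`, a conjunctive query over the names `A⁺ = inl A`, `A⁻ = inr A`. -/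
def qPlus (q : CQV CN RN IN V) : CQ (CN ⊕ CN) RN IN V where
  roleAtoms := q.roleAtoms
  concAtoms := (fun p : CN × Term V IN => ((Sum.inl p.1 : CN ⊕ CN), p.2)) '' q.atPlus ∪
               (fun p : CN × Term V IN => ((Sum.inr p.1 : CN ⊕ CN), p.2)) '' q.atBF
  roleAtoms_finite := q.roleAtoms_finite
  concAtoms_finite := (q.atPlus_finite.image _).union (q.atBF_finite.image _)

/-- The ABox `A_q` freezing the query `q⁺`, over individual names `IN ⊕ V`. -/
def aboxQ (q : CQV CN RN IN V) : Set (Assertion (CN ⊕ CN) RN (IN ⊕ V)) :=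
  (fun p : RN × Term V IN × Term V IN =>
      Assertion.ra p.1 p.2.1.toInd p.2.2.toInd) '' (qPlus q).roleAtoms ∪
  (fun p : (CN ⊕ CN) × Term V IN =>
      Assertion.ca p.1 p.2.toInd) '' (qPlus q).concAtoms

theorem aboxQ_finite (q : CQV CN RN IN V) : (aboxQ q).Finite :=
  ((qPlus q).roleAtoms_finite.image _).union ((qPlus q).concAtoms_finite.image _)

/-- The ground atoms of the disjunction `q_ctr`. -/
def ctrAtoms (q : CQV CN RN IN V) : Set ((CN ⊕ CN) × (IN ⊕ V)) :=
  (fun p : CN × Term V IN => ((Sum.inr p.1 : CN ⊕ CN), p.2.toInd)) '' q.atTN ∪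
  (fun p : CN × Term V IN => ((Sum.inl p.1 : CN ⊕ CN), p.2.toInd)) '' q.atFN

/-- Classical entailment of a disjunction of ground concept atoms. -/
def clEntailsDisj {CN' IN' : Type} (K : KB CN' RN IN') (G : Set (CN' × IN')) : Prop :=
  ∀ J : ClassInterp CN' RN IN', J.satKB K → ∃ g ∈ G, J.ind g.2 ∈ J.cext g.1

/-- Re-index the individual names of an assertion along `Sum.inl`. -/
def Assertion.extendInd : Assertion CN RN IN → Assertion CN RN (IN ⊕ V)
  | .ca A a => .ca A (Sum.inl a)
  | .ra R a b => .ra R (Sum.inl a) (Sum.inl b)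

/-- Re-index a KB to the enlarged set of individual names `IN ⊕ V`,
and add a further finite ABox. -/
def KB.extendWith (K : KB CN RN IN) (A2 : Set (Assertion CN RN (IN ⊕ V)))
    (h : A2.Finite) : KB CN RN (IN ⊕ V) where
  tbox := K.tbox
  abox := (Assertion.extendInd '' K.abox) ∪ A2
  tbox_finite := K.tbox_finite
  abox_finite := (K.abox_finite.image _).union h

/-! ### Repair-based semantics -/

def clConsistentS (T : Set (DLAxiom CN RN)) (A : Set (Assertion CN RN IN)) : Prop :=
  ∃ J : ClassInterp CN RN IN, (∀ ax ∈ T, J.satAx ax) ∧ (∀ α ∈ A, J.satAssert α)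

def clEntailsAssertS (T : Set (DLAxiom CN RN)) (A : Set (Assertion CN RN IN))
    (φ : Assertion CN RN IN) : Prop :=
  ∀ J : ClassInterp CN RN IN,
    ((∀ ax ∈ T, J.satAx ax) ∧ (∀ α ∈ A, J.satAssert α)) → J.satAssert φ

def clEntailsCQS (T : Set (DLAxiom CN RN)) (A : Set (Assertion CN RN IN))
    (q : CQ CN RN IN V) : Prop :=
  ∀ J : ClassInterp CN RN IN,
    ((∀ ax ∈ T, J.satAx ax) ∧ (∀ α ∈ A, J.satAssert α)) → ∃ π, J.cqMatch q π

/-- A repair: an inclusion-maximal subset of the ABox consistent with the TBox. -/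
def IsRepair (K : KB CN RN IN) (A' : Set (Assertion CN RN IN)) : Prop :=
  A' ⊆ K.abox ∧ clConsistentS K.tbox A' ∧
  ∀ A'' : Set (Assertion CN RN IN),
    A' ⊆ A'' → A'' ⊆ K.abox → clConsistentS K.tbox A'' → A'' = A'

/-- The closure `C*_T(A)`. -/
def Cstar (K : KB CN RN IN) : Set (Assertion CN RN IN) :=
  {φ | ∃ A', A' ⊆ K.abox ∧ clConsistentS K.tbox A' ∧ clEntailsAssertS K.tbox A' φ}

/-- Closed repairs. -/
def IsClosedRepair (K : KB CN RN IN) (Rp : Set (Assertion CN RN IN)) : Prop :=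
  Rp ⊆ Cstar K ∧ clConsistentS K.tbox Rp ∧
  ∀ Rp' : Set (Assertion CN RN IN), Rp' ⊆ Cstar K → clConsistentS K.tbox Rp' →
    ¬(Rp ∩ K.abox ⊂ Rp' ∩ K.abox) ∧ ¬(Rp ∩ K.abox = Rp' ∩ K.abox ∧ Rp ⊂ Rp')

def braveEntailsAssert (K : KB CN RN IN) (φ : Assertion CN RN IN) : Prop :=
  ∃ A', IsRepair K A' ∧ clEntailsAssertS K.tbox A' φ

def iarEntailsAssert (K : KB CN RN IN) (φ : Assertion CN RN IN) : Prop :=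
  clEntailsAssertS K.tbox (⋂₀ {A' | IsRepair K A'}) φ

def carEntailsAssert (K : KB CN RN IN) (φ : Assertion CN RN IN) : Prop :=
  ∀ Rp, IsClosedRepair K Rp → clEntailsAssertS K.tbox Rp φ

/-- `K ⊨₄ T(A(a))`: `A(a)` is exactly-true entailed. -/
def fourEntailsT (K : KB CN RN IN) (A : CN) (a : IN) : Prop :=
  (∀ I : FourInterp CN RN IN, I.satKB K → I.ind a ∈ I.cpos A) ∧
  (∃ I : FourInterp CN RN IN, I.satKB K ∧ I.ind a ∈ I.cpos A ∧ I.ind a ∉ I.cneg A)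

/-! ### The chase for ELHI_¬ -/

/-- Chase elements: individual names plus fresh successors created by
existential axioms. -/
inductive CE (CN RN IN : Type) : Type where
  | base : IN → CE CN RN IN
  | step : CE CN RN IN → DLAxiom CN RN → CE CN RN IN

mutual
/-- `ChaseC K A d`: the chase of `K` puts element `d` in concept name `A`. -/
inductive ChaseC : KB CN RN IN → CN → CE CN RN IN → Prop where
  | abox {K : KB CN RN IN} {A a} :
      Assertion.ca A a ∈ K.abox → ChaseC K A (.base a)
  | inter {K : KB CN RN IN} {L₁ L₂ : Concept CN RN} {B d} :
      DLAxiom.cinc (Concept.inter L₁ L₂) (Concept.atom B) ∈ K.tbox →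
      (∀ A, L₁ = Concept.atom A → ChaseC K A d) →
      (∀ A, L₂ = Concept.atom A → ChaseC K A d) →
      ChaseC K B d
  | exlName {K : KB CN RN IN} {R : RN} {L : Concept CN RN} {B d e} :
      DLAxiom.cinc (Concept.ex (Role.name R) L) (Concept.atom B) ∈ K.tbox →
      ChaseR K R d e → (∀ A, L = Concept.atom A → ChaseC K A e) →
      ChaseC K B d
  | exlInv {K : KB CN RN IN} {R : RN} {L : Concept CN RN} {B d e} :
      DLAxiom.cinc (Concept.ex (Role.inv R) L) (Concept.atom B) ∈ K.tbox →
      ChaseR K R e d → (∀ A, L = Concept.atom A → ChaseC K A e) →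
      ChaseC K B d
  | exrFill {K : KB CN RN IN} {L : Concept CN RN} {S : Role RN} {B d} :
      DLAxiom.cinc L (Concept.ex S (Concept.atom B)) ∈ K.tbox →
      (∀ A, L = Concept.atom A → ChaseC K A d) →
      ChaseC K B (.step d (DLAxiom.cinc L (Concept.ex S (Concept.atom B))))

/-- `ChaseR K R d e`: the chase of `K` puts the pair `(d,e)` in role name `R`. -/
inductive ChaseR : KB CN RN IN → RN → CE CN RN IN → CE CN RN IN → Prop where
  | abox {K : KB CN RN IN} {R a b} :
      Assertion.ra R a b ∈ K.abox → ChaseR K R (.base a) (.base b)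
  | rincNN {K : KB CN RN IN} {R₁ R₂ d e} :
      DLAxiom.rinc (Role.name R₁) (Role.name R₂) ∈ K.tbox →
      ChaseR K R₁ d e → ChaseR K R₂ d e
  | rincNI {K : KB CN RN IN} {R₁ R₂ d e} :
      DLAxiom.rinc (Role.name R₁) (Role.inv R₂) ∈ K.tbox →
      ChaseR K R₁ d e → ChaseR K R₂ e d
  | rincIN {K : KB CN RN IN} {R₁ R₂ d e} :
      DLAxiom.rinc (Role.inv R₁) (Role.name R₂) ∈ K.tbox →
      ChaseR K R₁ e d → ChaseR K R₂ d e
  | rincII {K : KB CN RN IN} {R₁ R₂ d e} :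
      DLAxiom.rinc (Role.inv R₁) (Role.inv R₂) ∈ K.tbox →
      ChaseR K R₁ e d → ChaseR K R₂ e d
  | exrEdgeName {K : KB CN RN IN} {L Bc : Concept CN RN} {R : RN} {d} :
      DLAxiom.cinc L (Concept.ex (Role.name R) Bc) ∈ K.tbox →
      (∀ A, L = Concept.atom A → ChaseC K A d) →
      ChaseR K R d (.step d (DLAxiom.cinc L (Concept.ex (Role.name R) Bc)))
  | exrEdgeInv {K : KB CN RN IN} {L Bc : Concept CN RN} {R : RN} {d} :
      DLAxiom.cinc L (Concept.ex (Role.inv R) Bc) ∈ K.tbox →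
      (∀ A, L = Concept.atom A → ChaseC K A d) →
      ChaseR K R (.step d (DLAxiom.cinc L (Concept.ex (Role.inv R) Bc))) d
end

/-!
In a 4-model the positive extensions alone already satisfy every ELHI_¬ inclusion except
the disjointness axioms `A ⊑ ¬B`, which speak about negative extensions. Taking the
product of the positive part with a classical model `J` repairs these, since `J` keeps
the extensions of `A` and `B` apart; all remaining ELHI_¬ concepts are positive
existential and so are evaluated componentwise in the product. Hence every 4-model
carries a classical model of `K` projecting onto it, and a match of `q^♭` there projects
to the match demanded by `K ⊨₄ q`. The second clause is witnessed by `J` itself, read as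
a 4-interpretation in which every concept is exactly true or exactly false.
-/

section Horn

variable {CN RN IN V : Type}

inductive IsPosExists : Concept CN RN → Prop where
  | top : IsPosExists Concept.top
  | atom (A : CN) : IsPosExists (Concept.atom A)
  | inter {C D : Concept CN RN} : IsPosExists C → IsPosExists D → IsPosExists (Concept.inter C D)
  | ex {C : Concept CN RN} (S : Role RN) : IsPosExists C → IsPosExists (Concept.ex S C)

theorem AtomTop.isPosExists {C : Concept CN RN} (h : AtomTop C) : IsPosExists C := by
  rcases h with rfl | ⟨A, rfl⟩
  exacts [.top, .atom A]

def IsHornHead (M : Concept CN RN) : Prop :=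
  IsPosExists M ∨ ∃ B, IsPosExists B ∧ M = Concept.neg B

theorem AtomTopBot.isHornHead {M : Concept CN RN} (h : AtomTopBot M) : IsHornHead M := by
  rcases h with rfl | rfl | ⟨A, rfl⟩
  · exact .inl .top
  · exact .inr ⟨_, .top, rfl⟩
  · exact .inl (.atom A)

theorem IsELHInegAxiom.cinc {L M : Concept CN RN} (h : IsELHInegAxiom (DLAxiom.cinc L M)) :
    IsPosExists L ∧ IsHornHead M := by
  rcases h with ⟨hL, S, B, hB, rfl⟩ | ⟨⟨S, A, hA, rfl⟩, hM⟩ |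
      ⟨⟨A, B, hA, hB, rfl⟩, hM⟩ | ⟨hL, B, hB, rfl⟩
  · exact ⟨hL.isPosExists, .inl (.ex S hB.isPosExists)⟩
  · exact ⟨.ex S hA.isPosExists, hM.isHornHead⟩
  · exact ⟨.inter hA.isPosExists hB.isPosExists, hM.isHornHead⟩
  · exact ⟨hL.isPosExists, .inr ⟨B, hB.isPosExists, rfl⟩⟩

theorem FourInterp.pExt_ex (I : FourInterp CN RN IN) (S : Role RN) (C : Concept CN RN) :
    I.pExt (Concept.ex S C) = {x | ∃ y, (x, y) ∈ I.rInterp S ∧ y ∈ I.pExt C} := rfl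

theorem ClassInterp.ext_ex (J : ClassInterp CN RN IN) (S : Role RN) (C : Concept CN RN) :
    J.ext (Concept.ex S C) = {x | ∃ y, (x, y) ∈ J.rInterp S ∧ y ∈ J.ext C} := by
  ext x
  simp [Concept.ex, ClassInterp.ext]

def FourInterp.posProd (I : FourInterp CN RN IN) (J : ClassInterp CN RN IN) :
    ClassInterp CN RN IN where
  Dom := I.Dom × J.Dom
  dom_nonempty := by
    obtain ⟨x⟩ := I.dom_nonempty
    obtain ⟨y⟩ := J.dom_nonempty
    exact ⟨(x, y)⟩
  cext A := {p | p.1 ∈ I.cpos A ∧ p.2 ∈ J.cext A}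
  rext R := {pq | (pq.1.1, pq.2.1) ∈ I.rext R ∧ (pq.1.2, pq.2.2) ∈ J.rext R}
  ind a := (I.ind a, J.ind a)

namespace FourInterp

variable (I : FourInterp CN RN IN) (J : ClassInterp CN RN IN)

theorem mem_posProd_rInterp (S : Role RN) (p q : (I.posProd J).Dom) :
    (p, q) ∈ (I.posProd J).rInterp S ↔ (p.1, q.1) ∈ I.rInterp S ∧ (p.2, q.2) ∈ J.rInterp S := by
  cases S <;> exact Iff.rfl

theorem mem_posProd_ext {C : Concept CN RN} (hC : IsPosExists C) (p : (I.posProd J).Dom) :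
    p ∈ (I.posProd J).ext C ↔ p.1 ∈ I.pExt C ∧ p.2 ∈ J.ext C := by
  induction hC generalizing p with
  | top => exact ⟨fun _ => ⟨trivial, trivial⟩, fun _ => trivial⟩
  | atom A => exact Iff.rfl
  | inter _ _ ihC ihD =>
    change p ∈ _ ∩ _ ↔ p.1 ∈ _ ∩ _ ∧ p.2 ∈ _ ∩ _
    rw [Set.mem_inter_iff, ihC, ihD]
    exact and_and_and_comm
  | ex S _ ih =>
    rw [ClassInterp.ext_ex, pExt_ex, ClassInterp.ext_ex]
    constructor
    · rintro ⟨y, hxy, hy⟩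
      rw [mem_posProd_rInterp] at hxy
      rw [ih] at hy
      exact ⟨⟨y.1, hxy.1, hy.1⟩, ⟨y.2, hxy.2, hy.2⟩⟩
    · rintro ⟨⟨y₁, h₁, hy₁⟩, ⟨y₂, h₂, hy₂⟩⟩
      exact ⟨(y₁, y₂), (mem_posProd_rInterp I J S p (y₁, y₂)).2 ⟨h₁, h₂⟩,
        (ih (y₁, y₂)).2 ⟨hy₁, hy₂⟩⟩

theorem mem_posProd_ext_of_isHornHead {M : Concept CN RN} (hM : IsHornHead M)
    {p : (I.posProd J).Dom} (h₁ : p.1 ∈ I.pExt M) (h₂ : p.2 ∈ J.ext M) :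
    p ∈ (I.posProd J).ext M := by
  rcases hM with hM | ⟨B, hB, rfl⟩
  · exact (I.mem_posProd_ext J hM p).2 ⟨h₁, h₂⟩
  · exact fun hp => h₂ ((I.mem_posProd_ext J hB p).1 hp).2

variable {I J}

theorem posProd_satAx {ax : DLAxiom CN RN} (hax : IsELHInegAxiom ax)
    (hI : I.satAx ax) (hJ : J.satAx ax) : (I.posProd J).satAx ax := by
  cases ax with
  | rinc S S' =>
    rintro ⟨p, q⟩ hpq
    rw [mem_posProd_rInterp] at hpq ⊢
    exact ⟨hI hpq.1, hJ hpq.2⟩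
  | cinc L M =>
    obtain ⟨hL, hM⟩ := hax.cinc
    intro p hp
    rw [mem_posProd_ext I J hL] at hp
    exact I.mem_posProd_ext_of_isHornHead J hM (hI hp.1) (hJ hp.2)

theorem posProd_satKB {K : KB CN RN IN} (hK : IsELHInegKB K) (hI : I.satKB K)
    (hJ : J.satKB K) : (I.posProd J).satKB K := by
  refine ⟨fun ax hax => posProd_satAx (hK ax hax) (hI.1 ax hax) (hJ.1 ax hax), ?_⟩
  intro α hα
  cases α with
  | ca A a => exact ⟨hI.2 _ hα, hJ.2 _ hα⟩
  | ra R a b => exact ⟨hI.2 _ hα, hJ.2 _ hα⟩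

end FourInterp

def ClassInterp.asFour (J : ClassInterp CN RN IN) : FourInterp CN RN IN where
  Dom := J.Dom
  dom_nonempty := J.dom_nonempty
  cpos := J.cext
  cneg A := (J.cext A)ᶜ
  rext := J.rext
  ind := J.ind

namespace ClassInterp

variable (J : ClassInterp CN RN IN)

theorem asFour_rInterp (S : Role RN) : J.asFour.rInterp S = J.rInterp S := by
  cases S <;> rfl

theorem asFour_ext (C : Concept CN RN) : J.asFour.ext C = (J.ext C, (J.ext C)ᶜ) := by
  induction C with
  | top => simp [FourInterp.ext, ClassInterp.ext]; rfl
  | atom A => rfl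
  | neg C ih => simp [FourInterp.ext, ClassInterp.ext, ih]; rfl
  | tri C ih => simp [FourInterp.ext, ClassInterp.ext, ih]; rfl
  | inter C D ihC ihD => simp [FourInterp.ext, ClassInterp.ext, ihC, ihD, Set.compl_inter]; rfl
  | all S C ih =>
    simp only [FourInterp.ext, ClassInterp.ext, ih, asFour_rInterp]
    refine Prod.ext rfl (Set.ext fun x => ?_)
    change (∃ y, (x, y) ∈ J.rInterp S ∧ y ∉ J.ext C) ↔ ¬∀ y, (x, y) ∈ J.rInterp S → y ∈ J.ext C
    simp only [not_forall, exists_prop]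

theorem asFour_satKB {K : KB CN RN IN} (h : J.satKB K) : J.asFour.satKB K := by
  refine ⟨fun ax hax => ?_, fun α hα => ?_⟩
  · cases ax with
    | cinc C D =>
      have hCD : J.ext C ⊆ J.ext D := h.1 _ hax
      change (J.asFour.ext C).1 ⊆ (J.asFour.ext D).1
      rwa [asFour_ext, asFour_ext]
    | rinc S S' =>
      have hSS' : J.rInterp S ⊆ J.rInterp S' := h.1 _ hax
      change J.asFour.rInterp S ⊆ J.asFour.rInterp S'
      rwa [asFour_rInterp, asFour_rInterp]
  · cases α with
    | ca A a => exact h.2 _ hα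
    | ra R a b => exact h.2 _ hα

end ClassInterp

namespace CQV

def HasOnlyTValues (q : CQV CN RN IN V) : Prop := ∀ p ∈ q.valAtoms, p.1 = TVal.T

variable {q : CQV CN RN IN V}

theorem atV_eq_empty (hq : q.HasOnlyTValues) {X : TVal} (hX : X ≠ TVal.T) :
    q.atV X = ∅ :=
  Set.eq_empty_of_forall_notMem fun _ hp => hX (hq _ hp)

theorem atPlus_eq (hq : q.HasOnlyTValues) :
    q.atPlus = q.concAtoms ∪ q.atV TVal.T := by
  simp [atPlus, atV_eq_empty hq]

theorem atBF_eq (hq : q.HasOnlyTValues) : q.atBF = ∅ := by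
  simp [atBF, atV_eq_empty hq]

theorem atTN_eq (hq : q.HasOnlyTValues) : q.atTN = q.atV TVal.T := by
  simp [atTN, atV_eq_empty hq]

theorem atFN_eq (hq : q.HasOnlyTValues) : q.atFN = ∅ := by
  simp [atFN, atV_eq_empty hq]

end CQV

variable {q : CQV CN RN IN V}

theorem FourInterp.cqvMatch1_of_flatMatch_posProd (hq : q.HasOnlyTValues)
    {I : FourInterp CN RN IN} {J : ClassInterp CN RN IN} {π : Term V IN → I.Dom × J.Dom}
    (h : (I.posProd J).flatMatch q π) : I.cqvMatch1 q (Prod.fst ∘ π) := by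
  obtain ⟨hind, hrole, hconc, -⟩ := h
  refine ⟨fun c => congrArg Prod.fst (hind c), fun p hp => (hrole p hp).1, ?_, ?_⟩
  · rw [CQV.atPlus_eq hq]
    exact fun p hp => (hconc p hp).1
  · simp [CQV.atBF_eq hq]

theorem ClassInterp.asFour_cqvMatch_of_flatMatch (hq : q.HasOnlyTValues)
    {J : ClassInterp CN RN IN} {π : Term V IN → J.Dom} (h : J.flatMatch q π) :
    J.asFour.cqvMatch1 q π ∧ J.asFour.cqvMatch2 q π := by
  obtain ⟨hind, hrole, hconc, -⟩ := h
  refine ⟨⟨hind, hrole, ?_, ?_⟩, ?_, ?_⟩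
  · rw [CQV.atPlus_eq hq]
    exact hconc
  · simp [CQV.atBF_eq hq]
  · rw [CQV.atTN_eq hq]
    exact fun p hp hneg => hneg (hconc p (Or.inr hp))
  · simp [CQV.atFN_eq hq]

end Horn

/-- completeness for Horn — if `K` is a classically satisfiable
ELHI_¬ KB and the only value operator in `q` is `T`, then `K ⊨ q^♭` implies
`K ⊨₄ q`. -/
theorem completeness_horn {CN RN IN V : Type} (K : KB CN RN IN)
    (hK : IsELHInegKB K) (hcons : ∃ J : ClassInterp CN RN IN, J.satKB K)
    (q : CQV CN RN IN V) (hq : ∀ p ∈ q.valAtoms, p.1 = TVal.T) :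
    clEntailsFlat K q → fourEntailsCQV K q := by
  intro hflat
  obtain ⟨J, hJ⟩ := hcons
  refine ⟨fun I hI => ?_, ?_⟩
  · obtain ⟨π, hπ⟩ := hflat _ (FourInterp.posProd_satKB hK hI hJ)
    exact ⟨_, FourInterp.cqvMatch1_of_flatMatch_posProd hq hπ⟩
  · obtain ⟨π, hπ⟩ := hflat J hJ
    exact ⟨J.asFour, J.asFour_satKB hJ, π, ClassInterp.asFour_cqvMatch_of_flatMatch hq hπ⟩

end Para
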